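/- arXiv:2305.09336 — 4 statements merged into one kernel-verified Lean document; each statement's English description precedes it below -/
import Mathlib

section
/- (Concentration of the marginal posterior.) Let A ⊆ ℝ^q be measurable and f : ℝ^p × A → ℝ be measurable with e^{f} integrable over ℝ^p × A and, for each η ∈ A, u ↦ e^{f(u,η)} integrable on ℝ^p with positive integral. Fix θ* ∈ ℝ^p, a map η ↦ θ_η ∈ ℝ^p, symmetric positive definite p × p matrices D and D_η (η ∈ A), radii r_η > 0 and r* > 0, and constants x ∈ ℝ, 0 < ν ≤ 1, C₀ ≥ 1, b ≥ 0. Assume: (i) for every η ∈ A, ∫_{{u : ‖D_η (u − θ_η)‖ > ν^{-1} r_η}} e^{f(u,η)} du ≤ e^{-x} ∫_{ℝ^p} e^{f(u,η)} du; (ii) for every η ∈ A, C₀^{-2} D² ⪯ D_η² ⪯ C₀² D² in the Loewner order; (iii) sup_{η ∈ A} ‖D (θ_η − θ*)‖ ≤ b; (iv) r_η ≤ C₀ r* for every η ∈ A. Then ∫∫_{{(u,η) ∈ ℝ^p × A : ‖D (u − θ*)‖ > C₀² ν^{-1} r* + b}} e^{f(u,η)} du dη ≤ e^{-x} ∫∫_{ℝ^p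 × A} e^{f(u,η)} du dη; that is, under the probability measure with density proportional to e^{f}, the θ-component X satisfies P(‖D (X − θ*)‖ > C₀² ν^{-1} r* + b) ≤ e^{-x}. -/
/-!
For each nuisance value `η`, the Loewner bound `C₀⁻² D² ⪯ D_η²` gives `‖D w‖ ≤ C₀ ‖D_η w‖`,
so by the triangle inequality through `θ_η` and the bias bound, every `u` with
`‖D (u - θ*)‖ > C₀² ν⁻¹ r* + b` satisfies `‖D_η (u - θ_η)‖ > ν⁻¹ r_η`. The conditional tail
bound (i) therefore controls each `η`-slice of the joint tail, and Fubini integrates these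
slice bounds over `η ∈ A`.
-/

open MeasureTheory Matrix Set

theorem Matrix.inner_toEuclideanLin_conjTranspose_mul_self {m n : Type*} [Fintype m] [Fintype n]
    [DecidableEq m] [DecidableEq n] (A : Matrix m n ℝ) (v : EuclideanSpace ℝ n) :
    inner ℝ v ((Aᴴ * A).toEuclideanLin v) = ‖A.toEuclideanLin v‖ ^ 2 := by
  have : (Aᴴ * A).toEuclideanLin v = Aᴴ.toEuclideanLin (A.toEuclideanLin v) := by
    simp [toLpLin_apply, mulVec_mulVec]
  rw [this, toEuclideanLin_conjTranspose_eq_adjoint, LinearMap.adjoint_inner_right,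
    real_inner_self_eq_norm_sq]

theorem Matrix.PosSemidef.smul_norm_sq_toEuclideanLin_le {m n k : Type*} [Fintype m] [Fintype n]
    [Fintype k] [DecidableEq m] [DecidableEq n] [DecidableEq k] {M : Matrix m n ℝ}
    {N : Matrix k n ℝ} {a : ℝ}
    (h : (Nᴴ * N - a • (Mᴴ * M)).PosSemidef) (v : EuclideanSpace ℝ n) :
    a * ‖M.toEuclideanLin v‖ ^ 2 ≤ ‖N.toEuclideanLin v‖ ^ 2 := by
  have := (Matrix.isPositive_toEuclideanLin_iff.2 h).inner_nonneg_right v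
  simp only [map_sub, map_smul, LinearMap.sub_apply, LinearMap.smul_apply, inner_sub_right,
    inner_smul_right, inner_toEuclideanLin_conjTranspose_mul_self] at this
  linarith

theorem Matrix.IsHermitian.norm_toEuclideanLin_le {n : Type*} [Fintype n] [DecidableEq n]
    {M N : Matrix n n ℝ} (hM : M.IsHermitian) (hN : N.IsHermitian) {c : ℝ} (hc : 0 < c)
    (h : (N ^ 2 - c⁻¹ ^ 2 • M ^ 2).PosSemidef) (v : EuclideanSpace ℝ n) :
    ‖M.toEuclideanLin v‖ ≤ c * ‖N.toEuclideanLin v‖ := by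
  have h' : (Nᴴ * N - c⁻¹ ^ 2 • (Mᴴ * M)).PosSemidef := by rwa [hM.eq, hN.eq, ← sq, ← sq]
  have hsq : ‖M.toEuclideanLin v‖ ^ 2 ≤ (c * ‖N.toEuclideanLin v‖) ^ 2 := by
    have := h'.smul_norm_sq_toEuclideanLin_le v
    rw [inv_pow, inv_mul_le_iff₀ (by positivity)] at this
    rwa [mul_pow]
  exact (pow_le_pow_iff_left₀ (norm_nonneg _) (by positivity) two_ne_zero).1 hsq

theorem setIntegral_prod_le_const_mul {α β : Type*} [MeasurableSpace α] [MeasurableSpace β]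
    {μ : Measure α} {ν : Measure β} [SFinite μ] [SFinite ν] {g : α × β → ℝ} {s : Set α}
    {A : Set β} (hA : MeasurableSet A) (hg : IntegrableOn g (univ ×ˢ A) (μ.prod ν)) {c : ℝ}
    (h : ∀ η ∈ A, ∫ u in s, g (u, η) ∂μ ≤ c * ∫ u, g (u, η) ∂μ) :
    ∫ z in s ×ˢ A, g z ∂μ.prod ν ≤ c * ∫ z in univ ×ˢ A, g z ∂μ.prod ν := by
  have hs : Integrable g ((μ.restrict s).prod (ν.restrict A)) := by
    rw [Measure.prod_restrict]; exact hg.mono_set (prod_mono (subset_univ s) le_rfl)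
  have hu : Integrable g (μ.prod (ν.restrict A)) := by
    rw [← Measure.restrict_univ (μ := μ), Measure.prod_restrict]; exact hg
  rw [← Measure.prod_restrict, ← Measure.prod_restrict, Measure.restrict_univ,
    integral_prod_symm _ hs, integral_prod_symm _ hu, ← integral_const_mul]
  exact setIntegral_mono_on hs.integral_prod_right (hu.integral_prod_right.const_mul c) hA h

theorem setOf_lt_norm_map_sub_subset {E F G 𝓕 : Type*} [AddGroup E] [SeminormedAddGroup F]
    [Norm G] [FunLike 𝓕 E F] [AddMonoidHomClass 𝓕 E F] (L : 𝓕) (M : E → G) {c ρ b : ℝ}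
    (hc : 0 ≤ c) (hLM : ∀ w, ‖L w‖ ≤ c * ‖M w‖) {θ θ₀ : E} (hθ : ‖L (θ - θ₀)‖ ≤ b) :
    {u | c * ρ + b < ‖L (u - θ₀)‖} ⊆ {u | ρ < ‖M (u - θ)‖} := by
  intro u (hu : c * ρ + b < _)
  refine lt_of_not_ge fun (hle : ‖M (u - θ)‖ ≤ ρ) => hu.not_ge ?_
  calc
    ‖L (u - θ₀)‖ = ‖L (u - θ) + L (θ - θ₀)‖ := by rw [← map_add, sub_add_sub_cancel]
    _ ≤ c * ‖M (u - θ)‖ + b := (norm_add_le _ _).trans (add_le_add (hLM _) hθ)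
    _ ≤ c * ρ + b := by gcongr

theorem marginal_posterior_concentration_general
    (p q : ℕ)
    (A : Set (EuclideanSpace ℝ (Fin q))) (hA : MeasurableSet A)
    (f : EuclideanSpace ℝ (Fin p) → EuclideanSpace ℝ (Fin q) → ℝ)
    (θs : EuclideanSpace ℝ (Fin p))
    (θη : EuclideanSpace ℝ (Fin q) → EuclideanSpace ℝ (Fin p))
    (D : Matrix (Fin p) (Fin p) ℝ)
    (Dη : EuclideanSpace ℝ (Fin q) → Matrix (Fin p) (Fin p) ℝ)
    (rη : EuclideanSpace ℝ (Fin q) → ℝ) (rs x ν C₀ b : ℝ)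
    (hD : D.PosDef) (hDη : ∀ η ∈ A, (Dη η).PosDef)
    (hν0 : 0 < ν) (hC₀ : 1 ≤ C₀)
    -- e^f is integrable over ℝ^p × A
    (hint : IntegrableOn
      (fun z : EuclideanSpace ℝ (Fin p) × EuclideanSpace ℝ (Fin q) => Real.exp (f z.1 z.2))
      ((Set.univ : Set (EuclideanSpace ℝ (Fin p))) ×ˢ A))
    -- per-slice integrability with positive integral
    (hslice_int : ∀ η ∈ A, Integrable (fun u => Real.exp (f u η)))
    -- (i) per-slice tail bound
    (htail : ∀ η ∈ A,
      (∫ u in {u : EuclideanSpace ℝ (Fin p) |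
          ‖Matrix.toEuclideanLin (Dη η) (u - θη η)‖ > ν⁻¹ * rη η}, Real.exp (f u η))
        ≤ Real.exp (-x) * ∫ u, Real.exp (f u η))
    -- (ii) Loewner sandwich C₀⁻² D² ⪯ D_η² ⪯ C₀² D²
    (hsand : ∀ η ∈ A, ((Dη η) ^ 2 - C₀⁻¹ ^ 2 • D ^ 2).PosSemidef ∧
        (C₀ ^ 2 • D ^ 2 - (Dη η) ^ 2).PosSemidef)
    -- (iii) uniform bias bound
    (hbias : ∀ η ∈ A, ‖Matrix.toEuclideanLin D (θη η - θs)‖ ≤ b)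
    -- (iv) radii comparison
    (hr : ∀ η ∈ A, rη η ≤ C₀ * rs) :
    (∫ z in {z : EuclideanSpace ℝ (Fin p) × EuclideanSpace ℝ (Fin q) |
        ‖Matrix.toEuclideanLin D (z.1 - θs)‖ > C₀ ^ 2 * ν⁻¹ * rs + b ∧ z.2 ∈ A},
      Real.exp (f z.1 z.2))
      ≤ Real.exp (-x) *
        ∫ z in (Set.univ : Set (EuclideanSpace ℝ (Fin p))) ×ˢ A, Real.exp (f z.1 z.2) := by
  have hC₀pos : 0 < C₀ := one_pos.trans_le hC₀
  rw [Measure.volume_eq_prod] at hint ⊢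
  refine setIntegral_prod_le_const_mul
    (s := {u | C₀ ^ 2 * ν⁻¹ * rs + b < ‖D.toEuclideanLin (u - θs)‖}) hA hint fun η hη => ?_
  have hradius : C₀ * (ν⁻¹ * rη η) ≤ C₀ ^ 2 * ν⁻¹ * rs := calc
    C₀ * (ν⁻¹ * rη η) ≤ C₀ * (ν⁻¹ * (C₀ * rs)) := by
      have := inv_nonneg.2 hν0.le
      gcongr
      exact hr η hη
    _ = C₀ ^ 2 * ν⁻¹ * rs := by ring
  have hsub : {u | C₀ ^ 2 * ν⁻¹ * rs + b < ‖D.toEuclideanLin (u - θs)‖} ⊆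
      {u | ν⁻¹ * rη η < ‖(Dη η).toEuclideanLin (u - θη η)‖} := by
    refine Subset.trans ?_ (setOf_lt_norm_map_sub_subset _ _ hC₀pos.le
      (hD.1.norm_toEuclideanLin_le (hDη η hη).1 hC₀pos (hsand η hη).1) (hbias η hη))
    exact fun u hu => (add_le_add hradius le_rfl).trans_lt hu
  exact (setIntegral_mono_set (hslice_int η hη).integrableOn
    (ae_of_all _ fun _ => (Real.exp_pos _).le) hsub.eventuallyLE).trans (htail η hη)

/-- Theorem: concentration of the marginal posterior. -/
theorem marginal_posterior_concentration
    (p q : ℕ)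
    (A : Set (EuclideanSpace ℝ (Fin q))) (hA : MeasurableSet A)
    (f : EuclideanSpace ℝ (Fin p) → EuclideanSpace ℝ (Fin q) → ℝ)
    (hfm : Measurable (fun z : EuclideanSpace ℝ (Fin p) × EuclideanSpace ℝ (Fin q) =>
      f z.1 z.2))
    (θs : EuclideanSpace ℝ (Fin p))
    (θη : EuclideanSpace ℝ (Fin q) → EuclideanSpace ℝ (Fin p))
    (D : Matrix (Fin p) (Fin p) ℝ)
    (Dη : EuclideanSpace ℝ (Fin q) → Matrix (Fin p) (Fin p) ℝ)
    (rη : EuclideanSpace ℝ (Fin q) → ℝ) (rs x ν C₀ b : ℝ)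
    (hD : D.PosDef) (hDη : ∀ η ∈ A, (Dη η).PosDef)
    (hrη : ∀ η ∈ A, 0 < rη η) (hrs : 0 < rs)
    (hν0 : 0 < ν) (hν1 : ν ≤ 1) (hC₀ : 1 ≤ C₀) (hb : 0 ≤ b)
    -- e^f is integrable over ℝ^p × A
    (hint : IntegrableOn
      (fun z : EuclideanSpace ℝ (Fin p) × EuclideanSpace ℝ (Fin q) => Real.exp (f z.1 z.2))
      ((Set.univ : Set (EuclideanSpace ℝ (Fin p))) ×ˢ A))
    -- per-slice integrability with positive integral
    (hslice_int : ∀ η ∈ A, Integrable (fun u => Real.exp (f u η)))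
    (hslice_pos : ∀ η ∈ A, 0 < ∫ u, Real.exp (f u η))
    -- (i) per-slice tail bound
    (htail : ∀ η ∈ A,
      (∫ u in {u : EuclideanSpace ℝ (Fin p) |
          ‖Matrix.toEuclideanLin (Dη η) (u - θη η)‖ > ν⁻¹ * rη η}, Real.exp (f u η))
        ≤ Real.exp (-x) * ∫ u, Real.exp (f u η))
    -- (ii) Loewner sandwich C₀⁻² D² ⪯ D_η² ⪯ C₀² D²
    (hsand : ∀ η ∈ A, ((Dη η) ^ 2 - C₀⁻¹ ^ 2 • D ^ 2).PosSemidef ∧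
        (C₀ ^ 2 • D ^ 2 - (Dη η) ^ 2).PosSemidef)
    -- (iii) uniform bias bound
    (hbias : ∀ η ∈ A, ‖Matrix.toEuclideanLin D (θη η - θs)‖ ≤ b)
    -- (iv) radii comparison
    (hr : ∀ η ∈ A, rη η ≤ C₀ * rs) :
    (∫ z in {z : EuclideanSpace ℝ (Fin p) × EuclideanSpace ℝ (Fin q) |
        ‖Matrix.toEuclideanLin D (z.1 - θs)‖ > C₀ ^ 2 * ν⁻¹ * rs + b ∧ z.2 ∈ A},
      Real.exp (f z.1 z.2))
      ≤ Real.exp (-x) *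
        ∫ z in (Set.univ : Set (EuclideanSpace ℝ (Fin p))) ×ˢ A, Real.exp (f z.1 z.2) :=
  marginal_posterior_concentration_general p q A hA f θs θη D Dη rη rs x ν C₀ b hD hDη hν0 hC₀ hint
    hslice_int htail hsand hbias hr
end

section
/- (Corollary on marginal posterior concentration.) Under the hypotheses of the marginal concentration theorem — namely: A ⊆ ℝ^q measurable, f : ℝ^p × A → ℝ with e^f integrable on ℝ^p × A and per-slice integrable with positive integrals; θ* ∈ ℝ^p; maps η ↦ θ_η; symmetric positive definite matrices D, D_η with C₀^{-2} D² ⪯ D_η² ⪯ C₀² D² (C₀ ≥ 1); radii r_η ≤ C₀ r*; per-slice tails ∫_{{‖D_η(u−θ_η)‖ > ν^{-1} r_η}} e^{f(u,η)} du ≤ e^{-x} ∫ e^{f(u,η)} du for 0 < ν ≤ 1 — assume in addition that sup_{η ∈ A} ‖D (θ_η − θ*)‖ ≤ C_bias · r* for a constant C_bias ≥ 0. Then ∫∫_{{(u,η) : ‖D (u − θ*)‖ > (C₀² ν^{-1} + C_bias) r*}} e^{f(u,η)} du dη ≤ e^{-x} ∫∫_{ℝ^p × A} e^{f(u,η)}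 du dη. -/
/-!
On each slice `η ∈ A`, the sandwich `C₀⁻² D² ⪯ D_η²` gives `‖D w‖ ≤ C₀ ‖D_η w‖`. With the triangle
inequality through `θ_η`, the radius comparison `r_η ≤ C₀ r*` and the bias bound, the event
`‖D (u - θ*)‖ > (C₀² ν⁻¹ + C_bias) r*` lies inside the slice tail event `‖D_η (u - θ_η)‖ > ν⁻¹ r_η`.
Integrating the slice tail bounds over `η ∈ A` (Fubini) gives the joint bound.
-/

open MeasureTheory

namespace Matrix

variable {n : Type*} [Fintype n] [DecidableEq n]

theorem norm_toEuclideanLin_sq {M : Matrix n n ℝ} (hM : M.IsHermitian) (v : EuclideanSpace ℝ n) :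
    ‖toEuclideanLin M v‖ ^ 2 = inner ℝ (toEuclideanLin (M ^ 2) v) v := by
  rw [← real_inner_self_eq_norm_sq, isSymmetric_toEuclideanLin_iff.mpr hM, toLpLin_pow, pow_two]
  exact real_inner_comm _ _

theorem mul_norm_toEuclideanLin_le {M N : Matrix n n ℝ} (hM : M.IsHermitian) (hN : N.IsHermitian)
    {c : ℝ} (hc : 0 ≤ c) (hMN : (N ^ 2 - c ^ 2 • M ^ 2).PosSemidef) (v : EuclideanSpace ℝ n) :
    c * ‖toEuclideanLin M v‖ ≤ ‖toEuclideanLin N v‖ := by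
  have hpos := (isPositive_toEuclideanLin_iff.mpr hMN).re_inner_nonneg_left v
  simp only [map_sub, map_smul, LinearMap.sub_apply, LinearMap.smul_apply, inner_sub_left,
    real_inner_smul_left, RCLike.re_to_real] at hpos
  rw [← pow_le_pow_iff_left₀ (by positivity) (norm_nonneg _) two_ne_zero, mul_pow,
    norm_toEuclideanLin_sq hM, norm_toEuclideanLin_sq hN]
  linarith

end Matrix

theorem setOf_lt_norm_sub_subset {E F G : Type*} [AddCommGroup E] [Module ℝ E]
    [SeminormedAddCommGroup F] [Module ℝ F] [SeminormedAddCommGroup G] [Module ℝ G]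
    {L : E →ₗ[ℝ] F} {L' : E →ₗ[ℝ] G} {C b R ρ : ℝ} {θ θ' : E}
    (hL : ∀ w, ‖L w‖ ≤ C * ‖L' w‖) (hC : 0 ≤ C) (hθ : ‖L (θ' - θ)‖ ≤ b) (hR : C * ρ + b ≤ R) :
    {u | R < ‖L (u - θ)‖} ⊆ {u | ρ < ‖L' (u - θ')‖} := by
  intro u (hu : R < _)
  show ρ < _
  by_contra! hle
  have htri : ‖L (u - θ)‖ ≤ ‖L (u - θ')‖ + ‖L (θ' - θ)‖ := by
    rw [← sub_add_sub_cancel u θ' θ, map_add]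
    exact norm_add_le _ _
  have := mul_le_mul_of_nonneg_left hle hC
  linarith [hL (u - θ'), hu.trans_le htri]

theorem setIntegral_prod_le_mul_of_forall_setIntegral_le
    {X Y : Type*} [MeasurableSpace X] [MeasurableSpace Y] {μ : Measure X} {ν : Measure Y}
    [SFinite μ] [SFinite ν] {g : X × Y → ℝ} {A : Set Y} {B : Set X} {c : ℝ}
    (hA : MeasurableSet A) (hg : IntegrableOn g (Set.univ ×ˢ A) (μ.prod ν))
    (hslice : ∀ y ∈ A, ∫ x in B, g (x, y) ∂μ ≤ c * ∫ x, g (x, y) ∂μ) :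
    ∫ z in B ×ˢ A, g z ∂μ.prod ν ≤ c * ∫ z in Set.univ ×ˢ A, g z ∂μ.prod ν := by
  have hgBA : Integrable g ((μ.restrict B).prod (ν.restrict A)) := by
    rw [Measure.prod_restrict]
    exact hg.mono_set (Set.prod_mono (Set.subset_univ B) le_rfl)
  have hgA : Integrable g (μ.prod (ν.restrict A)) := by
    rwa [← Measure.restrict_univ (μ := μ), Measure.prod_restrict]
  rw [← Measure.prod_restrict, integral_prod_symm g hgBA, ← Measure.prod_restrict,
    Measure.restrict_univ, integral_prod_symm g hgA, ← integral_const_mul]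
  refine integral_mono_ae hgBA.integral_prod_right (hgA.integral_prod_right.const_mul c) ?_
  exact (ae_restrict_iff' hA).mpr (ae_of_all _ hslice)

theorem marginal_posterior_concentration_bias_corollary_general
    (p q : ℕ)
    (A : Set (EuclideanSpace ℝ (Fin q))) (hA : MeasurableSet A)
    (f : EuclideanSpace ℝ (Fin p) → EuclideanSpace ℝ (Fin q) → ℝ)
    (θs : EuclideanSpace ℝ (Fin p))
    (θη : EuclideanSpace ℝ (Fin q) → EuclideanSpace ℝ (Fin p))
    (D : Matrix (Fin p) (Fin p) ℝ)
    (Dη : EuclideanSpace ℝ (Fin q) → Matrix (Fin p) (Fin p) ℝ)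
    (rη : EuclideanSpace ℝ (Fin q) → ℝ) (rs x ν C₀ Cbias : ℝ)
    (hD : D.PosDef) (hDη : ∀ η ∈ A, (Dη η).PosDef)
    (hν0 : 0 < ν) (hC₀ : 1 ≤ C₀)
    -- e^f is integrable over ℝ^p × A
    (hint : IntegrableOn
      (fun z : EuclideanSpace ℝ (Fin p) × EuclideanSpace ℝ (Fin q) => Real.exp (f z.1 z.2))
      ((Set.univ : Set (EuclideanSpace ℝ (Fin p))) ×ˢ A))
    -- per-slice integrability with positive integral
    (hslice_int : ∀ η ∈ A, Integrable (fun u => Real.exp (f u η)))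
    -- per-slice tail bound
    (htail : ∀ η ∈ A,
      (∫ u in {u : EuclideanSpace ℝ (Fin p) |
          ‖Matrix.toEuclideanLin (Dη η) (u - θη η)‖ > ν⁻¹ * rη η}, Real.exp (f u η))
        ≤ Real.exp (-x) * ∫ u, Real.exp (f u η))
    -- Loewner sandwich C₀⁻² D² ⪯ D_η² ⪯ C₀² D²
    (hsand : ∀ η ∈ A, ((Dη η) ^ 2 - C₀⁻¹ ^ 2 • D ^ 2).PosSemidef ∧
        (C₀ ^ 2 • D ^ 2 - (Dη η) ^ 2).PosSemidef)
    -- radii comparison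
    (hr : ∀ η ∈ A, rη η ≤ C₀ * rs)
    -- additional hypothesis: bias bounded by C_bias · r*
    (hbias : ∀ η ∈ A, ‖Matrix.toEuclideanLin D (θη η - θs)‖ ≤ Cbias * rs) :
    (∫ z in {z : EuclideanSpace ℝ (Fin p) × EuclideanSpace ℝ (Fin q) |
        ‖Matrix.toEuclideanLin D (z.1 - θs)‖ > (C₀ ^ 2 * ν⁻¹ + Cbias) * rs ∧ z.2 ∈ A},
      Real.exp (f z.1 z.2))
      ≤ Real.exp (-x) *
        ∫ z in (Set.univ : Set (EuclideanSpace ℝ (Fin p))) ×ˢ A, Real.exp (f z.1 z.2) := by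
  have hC₀pos : 0 < C₀ := zero_lt_one.trans_le hC₀
  have hsubset : ∀ η ∈ A,
      {u | (C₀ ^ 2 * ν⁻¹ + Cbias) * rs < ‖Matrix.toEuclideanLin D (u - θs)‖} ⊆
        {u | ν⁻¹ * rη η < ‖Matrix.toEuclideanLin (Dη η) (u - θη η)‖} := by
    intro η hη
    refine setOf_lt_norm_sub_subset (fun w => ?_) hC₀pos.le (hbias η hη) ?_
    · exact (inv_mul_le_iff₀ hC₀pos).mp <| Matrix.mul_norm_toEuclideanLin_le hD.1 (hDη η hη).1
        (inv_nonneg.2 hC₀pos.le) (hsand η hη).1 w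
    · have := mul_le_mul_of_nonneg_left (hr η hη) (by positivity : 0 ≤ C₀ * ν⁻¹)
      linarith
  have hslice : ∀ η ∈ A, ∫ u in {u | (C₀ ^ 2 * ν⁻¹ + Cbias) * rs <
      ‖Matrix.toEuclideanLin D (u - θs)‖}, Real.exp (f u η) ≤
        Real.exp (-x) * ∫ u, Real.exp (f u η) := fun η hη =>
    (setIntegral_mono_set (hslice_int η hη).integrableOn
      (ae_of_all _ fun u => (Real.exp_pos _).le) (hsubset η hη).eventuallyLE).trans (htail η hη)
  rw [Measure.volume_eq_prod] at hint ⊢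
  exact setIntegral_prod_le_mul_of_forall_setIntegral_le hA hint hslice

/-- Corollary on marginal posterior concentration, bias bounded by
`C_bias · r*`. -/
theorem marginal_posterior_concentration_bias_corollary
    (p q : ℕ)
    (A : Set (EuclideanSpace ℝ (Fin q))) (hA : MeasurableSet A)
    (f : EuclideanSpace ℝ (Fin p) → EuclideanSpace ℝ (Fin q) → ℝ)
    (hfm : Measurable (fun z : EuclideanSpace ℝ (Fin p) × EuclideanSpace ℝ (Fin q) =>
      f z.1 z.2))
    (θs : EuclideanSpace ℝ (Fin p))
    (θη : EuclideanSpace ℝ (Fin q) → EuclideanSpace ℝ (Fin p))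
    (D : Matrix (Fin p) (Fin p) ℝ)
    (Dη : EuclideanSpace ℝ (Fin q) → Matrix (Fin p) (Fin p) ℝ)
    (rη : EuclideanSpace ℝ (Fin q) → ℝ) (rs x ν C₀ Cbias : ℝ)
    (hD : D.PosDef) (hDη : ∀ η ∈ A, (Dη η).PosDef)
    (hrη : ∀ η ∈ A, 0 < rη η) (hrs : 0 < rs)
    (hν0 : 0 < ν) (hν1 : ν ≤ 1) (hC₀ : 1 ≤ C₀) (hCbias : 0 ≤ Cbias)
    -- e^f is integrable over ℝ^p × A
    (hint : IntegrableOn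
      (fun z : EuclideanSpace ℝ (Fin p) × EuclideanSpace ℝ (Fin q) => Real.exp (f z.1 z.2))
      ((Set.univ : Set (EuclideanSpace ℝ (Fin p))) ×ˢ A))
    -- per-slice integrability with positive integral
    (hslice_int : ∀ η ∈ A, Integrable (fun u => Real.exp (f u η)))
    (hslice_pos : ∀ η ∈ A, 0 < ∫ u, Real.exp (f u η))
    -- per-slice tail bound
    (htail : ∀ η ∈ A,
      (∫ u in {u : EuclideanSpace ℝ (Fin p) |
          ‖Matrix.toEuclideanLin (Dη η) (u - θη η)‖ > ν⁻¹ * rη η}, Real.exp (f u η))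
        ≤ Real.exp (-x) * ∫ u, Real.exp (f u η))
    -- Loewner sandwich C₀⁻² D² ⪯ D_η² ⪯ C₀² D²
    (hsand : ∀ η ∈ A, ((Dη η) ^ 2 - C₀⁻¹ ^ 2 • D ^ 2).PosSemidef ∧
        (C₀ ^ 2 • D ^ 2 - (Dη η) ^ 2).PosSemidef)
    -- radii comparison
    (hr : ∀ η ∈ A, rη η ≤ C₀ * rs)
    -- additional hypothesis: bias bounded by C_bias · r*
    (hbias : ∀ η ∈ A, ‖Matrix.toEuclideanLin D (θη η - θs)‖ ≤ Cbias * rs) :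
    (∫ z in {z : EuclideanSpace ℝ (Fin p) × EuclideanSpace ℝ (Fin q) |
        ‖Matrix.toEuclideanLin D (z.1 - θs)‖ > (C₀ ^ 2 * ν⁻¹ + Cbias) * rs ∧ z.2 ∈ A},
      Real.exp (f z.1 z.2))
      ≤ Real.exp (-x) *
        ∫ z in (Set.univ : Set (EuclideanSpace ℝ (Fin p))) ×ˢ A, Real.exp (f z.1 z.2) :=
  marginal_posterior_concentration_bias_corollary_general p q A hA f θs θη D Dη rη rs x ν C₀ Cbias
    hD hDη hν0 hC₀ hint hslice_int htail hsand hr hbias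
end

section
/- (Single-Gaussian Laplace approximation of the marginal.) Under the setup and hypotheses (i)–(ii) of the mixed Laplace approximation theorem — A ⊆ ℝ^q measurable, f : ℝ^p × A → ℝ with e^f integrable; θ_η ∈ ℝ^p, F_η symmetric positive definite, ◊_η ≥ 0 for η ∈ A; F = F_{η*}, φ_η = f(θ_η, η) − f(θ*, η*), δ_η = (1/2) log det(F_η^{-1} F); per-η Laplace bounds with error ◊_η + e^{-x}; integrability and positivity of the weights e^{φ_η + δ_η} — fix a measurable g : ℝ^p → ℝ with |g| ≤ 1, define Δ_{g,η} = E[g(θ_η + F_η^{-1/2} γ)] − E[g(θ* + F^{-1/2} γ)] (Gaussian expectations defined as normalized Gaussian integrals), Δ_g = | (∫_A Δ_{g,η} e^{φ_η + δ_η} dη) / (∫_A e^{φ_η + δ_η} dη) |, and err_A = (∫_A ◊_η e^{φ_η + δ_η} dη) / (∫_A e^{φ_η + δ_η} dη). If err_A + Δ_g < 1/2 − e^{-x}, then | (∫_{ℝ^p × A} e^{f(θ,η)} g(θ) dθ dη) / (∫_{ℝ^p × A} e^{f(θ,η)} dθ dη) − E[g(θ* + F^{-1/2} γ)] | ≤ 2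 (err_A + Δ_g + e^{-x}) / (1 − err_A − Δ_g − e^{-x}). -/
/-! The slice of `e^f` over a fixed `η` is, by the per-`η` Laplace bound, within a relative error
`◊_η + e^{-x}` of the Gaussian integral `e^{f(θ_η, η)} ∫ e^{-‖F_η^{1/2} u‖²/2}`, and the latter
equals `e^{f(θ*, η*)} ∫ e^{-‖F^{1/2} u‖²/2} · e^{φ_η + δ_η}` because the Gaussian normalizer scales
like `det(F_η)^{-1/2}`. Integrating these slice bounds over `A` (Fubini) approximates both the
numerator and the denominator of the ratio by the same constant times
`∫_A e^{φ_η + δ_η}`, up to relative errors `err_A + Δ_g + e^{-x}` and `err_A + e^{-x}`; an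
elementary estimate for a ratio of two such approximations gives the bound. -/

open MeasureTheory

/-- The positive semidefinite square root of a matrix (equal to `0` off the
positive semidefinite matrices). -/
noncomputable def matSqrt {n : ℕ} (M : Matrix (Fin n) (Fin n) ℝ) : Matrix (Fin n) (Fin n) ℝ :=
  open scoped Classical in
  if h : M.PosSemidef then
    (h.isHermitian.eigenvectorUnitary : Matrix (Fin n) (Fin n) ℝ) *
      Matrix.diagonal ((↑) ∘ (√·) ∘ h.isHermitian.eigenvalues) *
      (star h.isHermitian.eigenvectorUnitary : Matrix (Fin n) (Fin n) ℝ)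
  else 0

open Matrix

/-- The unnormalized density `e^{-‖M^{1/2} u‖²/2}` of `N(0, M⁻¹)`. -/
noncomputable def gaussianWeight {n : ℕ} (M : Matrix (Fin n) (Fin n) ℝ)
    (u : EuclideanSpace ℝ (Fin n)) : ℝ :=
  Real.exp (-‖toEuclideanLin (matSqrt M) u‖ ^ 2 / 2)

section GaussianWeight

variable {n : ℕ} {M K : Matrix (Fin n) (Fin n) ℝ}

theorem matSqrt_mul_self (hM : M.PosSemidef) : matSqrt M * matSqrt M = M := by
  rw [matSqrt, dif_pos hM]
  have hU : (star hM.isHermitian.eigenvectorUnitary : Matrix (Fin n) (Fin n) ℝ) *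
      (hM.isHermitian.eigenvectorUnitary : Matrix (Fin n) (Fin n) ℝ) = 1 :=
    Unitary.coe_star_mul_self _
  conv_rhs => rw [hM.isHermitian.spectral_theorem, Unitary.conjStarAlgAut_apply]
  simp only [Matrix.mul_assoc]
  rw [← Matrix.mul_assoc (star _ : Matrix (Fin n) (Fin n) ℝ) _, hU, Matrix.one_mul,
    ← Matrix.mul_assoc (diagonal _), diagonal_mul_diagonal]
  congr 3
  funext i
  simp [Real.mul_self_sqrt (hM.eigenvalues_nonneg i)]

theorem abs_det_matSqrt (hM : M.PosSemidef) : |(matSqrt M).det| = √M.det := by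
  rw [← Real.sqrt_sq_eq_abs, sq, ← det_mul, matSqrt_mul_self hM]

theorem map_toEuclideanLin_matSqrt_volume (hM : M.PosDef) :
    Measure.map (toEuclideanLin (matSqrt M)) (volume : Measure (EuclideanSpace ℝ (Fin n)))
      = ENNReal.ofReal (√M.det)⁻¹ • volume := by
  have hdet : LinearMap.det (toEuclideanLin (matSqrt M)) ≠ 0 := by
    rw [LinearMap.det_toLpLin, ← abs_ne_zero, abs_det_matSqrt hM.posSemidef]
    exact (Real.sqrt_pos.2 hM.det_pos).ne'
  rw [Measure.map_linearMap_addHaar_eq_smul_addHaar _ hdet, LinearMap.det_toLpLin, abs_inv,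
    abs_det_matSqrt hM.posSemidef]

theorem gaussianWeight_pos (M : Matrix (Fin n) (Fin n) ℝ) (u : EuclideanSpace ℝ (Fin n)) :
    0 < gaussianWeight M u :=
  Real.exp_pos _

theorem integral_exp_neg_norm_sq_div_two_pos :
    0 < ∫ u : EuclideanSpace ℝ (Fin n), Real.exp (-‖u‖ ^ 2 / 2) := by
  have h := GaussianFourier.integral_rexp_neg_mul_sq_norm
    (V := EuclideanSpace ℝ (Fin n)) (b := (1 / 2 : ℝ)) (by norm_num)
  simp only [neg_div, ← neg_mul, div_eq_inv_mul (_ ^ 2)] at h ⊢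
  rw [show (2 : ℝ)⁻¹ = 1 / 2 by norm_num, h]
  positivity

theorem integral_gaussianWeight (hM : M.PosDef) :
    ∫ u, gaussianWeight M u
      = (√M.det)⁻¹ * ∫ u : EuclideanSpace ℝ (Fin n), Real.exp (-‖u‖ ^ 2 / 2) := by
  have h := integral_map (μ := (volume : Measure (EuclideanSpace ℝ (Fin n))))
    (toEuclideanLin (matSqrt M)).continuous_of_finiteDimensional.aemeasurable
    (f := fun u => Real.exp (-‖u‖ ^ 2 / 2)) (by fun_prop)
  rw [map_toEuclideanLin_matSqrt_volume hM, integral_smul_measure,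
    ENNReal.toReal_ofReal (inv_nonneg.2 (Real.sqrt_nonneg _)), smul_eq_mul] at h
  exact h.symm

theorem integral_gaussianWeight_pos (hM : M.PosDef) : 0 < ∫ u, gaussianWeight M u := by
  rw [integral_gaussianWeight hM]
  have := Real.sqrt_pos.2 hM.det_pos
  have := integral_exp_neg_norm_sq_div_two_pos (n := n)
  positivity

theorem integrable_gaussianWeight (hM : M.PosDef) : Integrable (gaussianWeight M) :=
  Integrable.of_integral_ne_zero (integral_gaussianWeight_pos hM).ne'

theorem abs_integral_mul_gaussianWeight_le (hM : M.PosDef) {h : EuclideanSpace ℝ (Fin n) → ℝ}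
    (hb : ∀ u, |h u| ≤ 1) :
    |∫ u, h u * gaussianWeight M u| ≤ ∫ u, gaussianWeight M u := by
  rw [← Real.norm_eq_abs]
  refine norm_integral_le_of_norm_le (integrable_gaussianWeight hM) (ae_of_all _ fun u => ?_)
  rw [norm_mul, Real.norm_eq_abs, Real.norm_of_nonneg (gaussianWeight_pos M u).le]
  exact mul_le_of_le_one_left (gaussianWeight_pos M u).le (hb u)

theorem integral_gaussianWeight_eq_exp_mul (hM : M.PosDef) (hK : K.PosDef) :
    ∫ u, gaussianWeight M u
      = Real.exp (1 / 2 * Real.log (M⁻¹ * K).det) * ∫ u, gaussianWeight K u := by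
  have hdet : (M⁻¹ * K).det = K.det / M.det := by
    rw [det_mul, det_nonsing_inv, Ring.inverse_eq_inv', inv_mul_eq_div]
  have hexp : Real.exp (1 / 2 * Real.log (M⁻¹ * K).det) = √K.det / √M.det := by
    rw [hdet, mul_comm, ← Real.rpow_def_of_pos (div_pos hK.det_pos hM.det_pos),
      ← Real.sqrt_eq_rpow, Real.sqrt_div hK.det_pos.le]
  have := Real.sqrt_pos.2 hM.det_pos
  have := Real.sqrt_pos.2 hK.det_pos
  rw [integral_gaussianWeight hM, integral_gaussianWeight hK, hexp]
  field_simp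

end GaussianWeight

section Slice

variable {G : Type*} [AddGroup G] [MeasurableSpace G] [MeasurableAdd G] {μ : Measure G}
  [μ.IsAddLeftInvariant]

theorem integral_exp_mul_eq_exp_mul_integral_add (F h : G → ℝ) (a : G) :
    ∫ θ, Real.exp (F θ) * h θ ∂μ
      = Real.exp (F a) * ∫ u, Real.exp (F (a + u) - F a) * h (a + u) ∂μ := by
  rw [← integral_add_left_eq_self (fun θ => Real.exp (F θ) * h θ) a, ← integral_const_mul]
  congr 1 with u
  rw [← mul_assoc, ← Real.exp_add, add_sub_cancel]

theorem abs_integral_exp_mul_sub_le {F h : G → ℝ} {a : G} {e r N c w : ℝ}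
    (hlap : |∫ u, Real.exp (F (a + u) - F a) * h (a + u) ∂μ - e * N| ≤ r * N)
    (hN : Real.exp (F a) * N = c * w) :
    |∫ θ, Real.exp (F θ) * h θ ∂μ - c * (e * w)| ≤ c * (r * w) := by
  have key := mul_le_mul_of_nonneg_left hlap (Real.exp_pos (F a)).le
  rw [← abs_of_pos (Real.exp_pos (F a)), ← abs_mul, abs_of_pos (Real.exp_pos (F a)), mul_sub,
    ← integral_exp_mul_eq_exp_mul_integral_add] at key
  have he : c * (e * w) = Real.exp (F a) * (e * N) := by linear_combination (-e) * hN
  have hr : c * (r * w) = Real.exp (F a) * (r * N) := by linear_combination (-r) * hN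
  rwa [he, hr]

end Slice

theorem abs_setIntegral_sub_le {α : Type*} [MeasurableSpace α] {μ : Measure α} {s : Set α}
    (hs : MeasurableSet s) {F G H : α → ℝ} (hF : IntegrableOn F s μ) (hG : IntegrableOn G s μ)
    (hH : IntegrableOn H s μ) (hle : ∀ x ∈ s, |F x - G x| ≤ H x) :
    |∫ x in s, F x ∂μ - ∫ x in s, G x ∂μ| ≤ ∫ x in s, H x ∂μ := by
  rw [← integral_sub hF hG, ← Real.norm_eq_abs]
  exact norm_integral_le_of_norm_le hH ((ae_restrict_iff' hs).2 (ae_of_all _ hle))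

section Fubini

variable {α β E : Type*} [MeasurableSpace α] [MeasurableSpace β] [NormedAddCommGroup E]
  [NormedSpace ℝ E] {μ : Measure α} {ν : Measure β} [SFinite μ] [SFinite ν] {F : α × β → E}
  {t : Set β}

theorem IntegrableOn.integral_univ_prod (hF : IntegrableOn F (Set.univ ×ˢ t) (μ.prod ν)) :
    IntegrableOn (fun y => ∫ x, F (x, y) ∂μ) t ν := by
  rw [IntegrableOn, ← Measure.prod_restrict, Measure.restrict_univ] at hF
  exact hF.integral_prod_right

theorem setIntegral_univ_prod (hF : IntegrableOn F (Set.univ ×ˢ t) (μ.prod ν)) :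
    ∫ z in Set.univ ×ˢ t, F z ∂μ.prod ν = ∫ y in t, ∫ x, F (x, y) ∂μ ∂ν := by
  rw [IntegrableOn, ← Measure.prod_restrict, Measure.restrict_univ] at hF
  rw [← Measure.prod_restrict, Measure.restrict_univ]
  exact integral_prod_symm F hF

end Fubini

theorem abs_div_sub_le_of_abs_sub_le {a b s e d ε Δ : ℝ} (hs : 0 < s) (he : |e| ≤ 1)
    (hd : |d| ≤ Δ) (ha : |a - s * (e + d)| ≤ s * ε) (hb : |b - s| ≤ s * ε)
    (hsmall : ε + Δ < 1) :
    |a / b - e| ≤ 2 * (ε + Δ) / (1 - ε - Δ) := by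
  have hε : 0 ≤ ε := (mul_nonneg_iff_of_pos_left hs).1 ((abs_nonneg _).trans hb)
  have hΔ : 0 ≤ Δ := (abs_nonneg d).trans hd
  have hb_ge : s * (1 - ε) ≤ b := by linarith [(abs_le.1 hb).1]
  have hb_pos : 0 < b := (mul_pos hs (by linarith)).trans_le hb_ge
  have hnum : |a - b * e| ≤ s * (2 * ε + Δ) :=
    calc |a - b * e| = |(a - s * (e + d)) + s * d + e * (s - b)| := by ring_nf
      _ ≤ |a - s * (e + d)| + |s * d| + |e * (s - b)| := abs_add_three _ _ _
      _ ≤ s * ε + s * Δ + 1 * (s * ε) := by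
        rw [abs_mul, abs_mul, abs_of_pos hs, abs_sub_comm s]
        gcongr
      _ = s * (2 * ε + Δ) := by ring
  rw [div_sub' hb_pos.ne', abs_div, abs_of_pos hb_pos, div_le_div_iff₀ hb_pos (by linarith)]
  calc |a - b * e| * (1 - ε - Δ) ≤ s * (2 * ε + Δ) * (1 - ε - Δ) := by
        gcongr; linarith
    _ ≤ 2 * (ε + Δ) * (s * (1 - ε)) := by nlinarith [mul_nonneg hs.le hΔ, mul_nonneg hε hΔ]
    _ ≤ 2 * (ε + Δ) * b := by gcongr

theorem abs_setIntegral_div_setIntegral_sub_le {α : Type*} [MeasurableSpace α] {μ : Measure α}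
    {s : Set α} (hs : MeasurableSet s) {num den w err Δ : α → ℝ}
    {c e r : ℝ} (hc : 0 < c) (he : |e| ≤ 1) (hnum : IntegrableOn num s μ)
    (hden : IntegrableOn den s μ) (hw : IntegrableOn w s μ)
    (herr : IntegrableOn (fun x => err x * w x) s μ) (hΔ : IntegrableOn (fun x => Δ x * w x) s μ)
    (hW : 0 < ∫ x in s, w x ∂μ)
    (hnum_le : ∀ x ∈ s, |num x - c * ((e + Δ x) * w x)| ≤ c * ((err x + r) * w x))
    (hden_le : ∀ x ∈ s, |den x - c * w x| ≤ c * ((err x + r) * w x))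
    (hsmall : (∫ x in s, err x * w x ∂μ) / (∫ x in s, w x ∂μ)
      + |(∫ x in s, Δ x * w x ∂μ) / ∫ x in s, w x ∂μ| + r < 1) :
    |(∫ x in s, num x ∂μ) / (∫ x in s, den x ∂μ) - e|
      ≤ 2 * ((∫ x in s, err x * w x ∂μ) / (∫ x in s, w x ∂μ)
          + |(∫ x in s, Δ x * w x ∂μ) / ∫ x in s, w x ∂μ| + r)
        / (1 - (∫ x in s, err x * w x ∂μ) / (∫ x in s, w x ∂μ)
          - |(∫ x in s, Δ x * w x ∂μ) / ∫ x in s, w x ∂μ| - r) := by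
  set W := ∫ x in s, w x ∂μ
  set D := ∫ x in s, Δ x * w x ∂μ
  set ε := (∫ x in s, err x * w x ∂μ) / W
  have hcenter : IntegrableOn (fun x => c * ((e + Δ x) * w x)) s μ := by
    simp_rw [add_mul, mul_add]
    exact ((hw.const_mul e).const_mul c).add (hΔ.const_mul c)
  have hbound : IntegrableOn (fun x => c * ((err x + r) * w x)) s μ := by
    simp_rw [add_mul, mul_add]
    exact (herr.const_mul c).add ((hw.const_mul r).const_mul c)
  have hcenter_eq : ∫ x in s, c * ((e + Δ x) * w x) ∂μ = c * W * (e + D / W) := by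
    conv_lhs => simp only [add_mul, mul_add]
    rw [integral_add ((hw.const_mul e).const_mul c) (hΔ.const_mul c), integral_const_mul,
      integral_const_mul, integral_const_mul]
    change c * (e * W) + c * D = _
    field_simp
  have hbound_eq : ∫ x in s, c * ((err x + r) * w x) ∂μ = c * W * (ε + r) := by
    conv_lhs => simp only [add_mul, mul_add]
    rw [integral_add (herr.const_mul c) ((hw.const_mul r).const_mul c), integral_const_mul,
      integral_const_mul, integral_const_mul]
    change c * _ + c * (r * W) = _
    simp only [ε]
    field_simp
  calc _ ≤ 2 * (ε + r + |D / W|) / (1 - (ε + r) - |D / W|) := by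
        refine abs_div_sub_le_of_abs_sub_le (mul_pos hc hW) he le_rfl ?_ ?_ (by linarith)
        · rw [← hcenter_eq, ← hbound_eq]
          exact abs_setIntegral_sub_le hs hnum hcenter hbound hnum_le
        · rw [← hbound_eq, ← integral_const_mul]
          exact abs_setIntegral_sub_le hs hden (hw.const_mul c) hbound hden_le
    _ = _ := by ring_nf

theorem single_gaussian_laplace_approximation_general
    (p q : ℕ)
    (A : Set (EuclideanSpace ℝ (Fin q))) (hA : MeasurableSet A)
    (f : EuclideanSpace ℝ (Fin p) → EuclideanSpace ℝ (Fin q) → ℝ)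
    (θη : EuclideanSpace ℝ (Fin q) → EuclideanSpace ℝ (Fin p))
    (Fη : EuclideanSpace ℝ (Fin q) → Matrix (Fin p) (Fin p) ℝ)
    (dia : EuclideanSpace ℝ (Fin q) → ℝ)
    (θs : EuclideanSpace ℝ (Fin p)) (ηs : EuclideanSpace ℝ (Fin q)) (hηs : ηs ∈ A)
    (x : ℝ)
    (hFη : ∀ η ∈ A, (Fη η).PosDef)
    (hintf : IntegrableOn
      (fun z : EuclideanSpace ℝ (Fin p) × EuclideanSpace ℝ (Fin q) => Real.exp (f z.1 z.2))
      ((Set.univ : Set (EuclideanSpace ℝ (Fin p))) ×ˢ A))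
    (φ δ : EuclideanSpace ℝ (Fin q) → ℝ)
    (hφ : ∀ η, φ η = f (θη η) η - f θs ηs)
    (hδ : ∀ η, δ η = (1 / 2) * Real.log ((Fη η)⁻¹ * Fη ηs).det)
    -- per-η Laplace approximation bound with error ◊_η + e^{-x}
    (hlap : ∀ η ∈ A, ∀ h : EuclideanSpace ℝ (Fin p) → ℝ, Measurable h → (∀ u, |h u| ≤ 1) →
      |(∫ u, Real.exp (f (θη η + u) η - f (θη η) η) * h (θη η + u)) -
          ∫ u, Real.exp (-‖Matrix.toEuclideanLin (matSqrt (Fη η)) u‖ ^ 2 / 2) * h (θη η + u)|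
        ≤ (dia η + Real.exp (-x)) *
            ∫ u, Real.exp (-‖Matrix.toEuclideanLin (matSqrt (Fη η)) u‖ ^ 2 / 2))
    (hw1 : IntegrableOn (fun η => dia η * Real.exp (φ η + δ η)) A)
    (hw2 : IntegrableOn (fun η => Real.exp (φ η + δ η)) A)
    (hwpos : 0 < ∫ η in A, Real.exp (φ η + δ η))
    (errA : ℝ)
    (herrA : errA =
      (∫ η in A, dia η * Real.exp (φ η + δ η)) / ∫ η in A, Real.exp (φ η + δ η))
    -- the fixed test function g, |g| ≤ 1
    (g : EuclideanSpace ℝ (Fin p) → ℝ) (hg : Measurable g) (hgb : ∀ θ, |g θ| ≤ 1)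
    -- Δ_{g,η} : difference of the Gaussian expectations of g under N(θ_η, F_η⁻¹)
    -- and N(θ*, F⁻¹) (Gaussian expectations as normalized Gaussian integrals)
    (Δgη : EuclideanSpace ℝ (Fin q) → ℝ)
    (hΔgη : ∀ η, Δgη η =
      (∫ u, g (θη η + u) * Real.exp (-‖Matrix.toEuclideanLin (matSqrt (Fη η)) u‖ ^ 2 / 2)) /
        (∫ u, Real.exp (-‖Matrix.toEuclideanLin (matSqrt (Fη η)) u‖ ^ 2 / 2)) -
      (∫ u, g (θs + u) * Real.exp (-‖Matrix.toEuclideanLin (matSqrt (Fη ηs)) u‖ ^ 2 / 2)) /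
        (∫ u, Real.exp (-‖Matrix.toEuclideanLin (matSqrt (Fη ηs)) u‖ ^ 2 / 2)))
    (hΔint : IntegrableOn (fun η => Δgη η * Real.exp (φ η + δ η)) A)
    (Δg : ℝ)
    (hΔg : Δg = |(∫ η in A, Δgη η * Real.exp (φ η + δ η)) /
      ∫ η in A, Real.exp (φ η + δ η)|)
    (hsmall : errA + Δg < 1 / 2 - Real.exp (-x)) :
    |(∫ z in (Set.univ : Set (EuclideanSpace ℝ (Fin p))) ×ˢ A,
          Real.exp (f z.1 z.2) * g z.1) /
        (∫ z in (Set.univ : Set (EuclideanSpace ℝ (Fin p))) ×ˢ A, Real.exp (f z.1 z.2)) -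
      (∫ u, g (θs + u) * Real.exp (-‖Matrix.toEuclideanLin (matSqrt (Fη ηs)) u‖ ^ 2 / 2)) /
        (∫ u, Real.exp (-‖Matrix.toEuclideanLin (matSqrt (Fη ηs)) u‖ ^ 2 / 2))|
      ≤ 2 * (errA + Δg + Real.exp (-x)) / (1 - errA - Δg - Real.exp (-x)) := by
  simp only [← gaussianWeight.eq_1] at hlap hΔgη ⊢
  subst herrA hΔg
  have hF : (Fη ηs).PosDef := hFη ηs hηs
  have hN : 0 < ∫ u, gaussianWeight (Fη ηs) u := integral_gaussianWeight_pos hF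
  set E := (∫ u, g (θs + u) * gaussianWeight (Fη ηs) u) / ∫ u, gaussianWeight (Fη ηs) u
  set c := Real.exp (f θs ηs) * ∫ u, gaussianWeight (Fη ηs) u
  have hc : 0 < c := mul_pos (Real.exp_pos _) hN
  have hE : |E| ≤ 1 := by
    rw [abs_div, abs_of_pos hN, div_le_one hN]
    exact abs_integral_mul_gaussianWeight_le hF fun u => hgb _
  have hmass : ∀ η ∈ A, Real.exp (f (θη η) η) * ∫ u, gaussianWeight (Fη η) u
      = c * Real.exp (φ η + δ η) := by
    intro η hη
    rw [integral_gaussianWeight_eq_exp_mul (hFη η hη) hF, ← hδ, hφ, Real.exp_add, Real.exp_sub]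
    field_simp
    exact mul_comm _ _
  have hintg : IntegrableOn (fun z : _ × _ => Real.exp (f z.1 z.2) * g z.1) (Set.univ ×ˢ A) :=
    hintf.mul_bdd (hg.comp measurable_fst).aestronglyMeasurable
      (ae_of_all _ fun z => (Real.norm_eq_abs _).trans_le (hgb z.1))
  rw [Measure.volume_eq_prod, setIntegral_univ_prod hintg, setIntegral_univ_prod hintf]
  refine abs_setIntegral_div_setIntegral_sub_le hA hc hE
    (IntegrableOn.integral_univ_prod hintg) (IntegrableOn.integral_univ_prod hintf) hw2 hw1 hΔint
    hwpos (fun η hη => ?_) (fun η hη => ?_) (by linarith)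
  · refine abs_integral_exp_mul_sub_le (F := (f · η)) ?_ (hmass η hη)
    rw [hΔgη η, add_sub_cancel, div_mul_cancel₀ _ (integral_gaussianWeight_pos (hFη η hη)).ne']
    simpa only [mul_comm] using hlap η hη g hg hgb
  · simpa using abs_integral_exp_mul_sub_le (F := (f · η)) (h := fun _ => 1) (e := 1)
      (by simpa using hlap η hη (fun _ => 1) measurable_const (by simp)) (hmass η hη)

/-- Single-Gaussian Laplace approximation of the marginal. -/
theorem single_gaussian_laplace_approximation
    (p q : ℕ)
    (A : Set (EuclideanSpace ℝ (Fin q))) (hA : MeasurableSet A)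
    (f : EuclideanSpace ℝ (Fin p) → EuclideanSpace ℝ (Fin q) → ℝ)
    (hfm : Measurable (fun z : EuclideanSpace ℝ (Fin p) × EuclideanSpace ℝ (Fin q) =>
      f z.1 z.2))
    (θη : EuclideanSpace ℝ (Fin q) → EuclideanSpace ℝ (Fin p))
    (Fη : EuclideanSpace ℝ (Fin q) → Matrix (Fin p) (Fin p) ℝ)
    (dia : EuclideanSpace ℝ (Fin q) → ℝ)
    (θs : EuclideanSpace ℝ (Fin p)) (ηs : EuclideanSpace ℝ (Fin q)) (hηs : ηs ∈ A)
    (x : ℝ)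
    (hFη : ∀ η ∈ A, (Fη η).PosDef)
    (hdia : ∀ η ∈ A, 0 ≤ dia η)
    (hintf : IntegrableOn
      (fun z : EuclideanSpace ℝ (Fin p) × EuclideanSpace ℝ (Fin q) => Real.exp (f z.1 z.2))
      ((Set.univ : Set (EuclideanSpace ℝ (Fin p))) ×ˢ A))
    (φ δ : EuclideanSpace ℝ (Fin q) → ℝ)
    (hφ : ∀ η, φ η = f (θη η) η - f θs ηs)
    (hδ : ∀ η, δ η = (1 / 2) * Real.log ((Fη η)⁻¹ * Fη ηs).det)
    -- per-η Laplace approximation bound with error ◊_η + e^{-x}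
    (hlap : ∀ η ∈ A, ∀ h : EuclideanSpace ℝ (Fin p) → ℝ, Measurable h → (∀ u, |h u| ≤ 1) →
      |(∫ u, Real.exp (f (θη η + u) η - f (θη η) η) * h (θη η + u)) -
          ∫ u, Real.exp (-‖Matrix.toEuclideanLin (matSqrt (Fη η)) u‖ ^ 2 / 2) * h (θη η + u)|
        ≤ (dia η + Real.exp (-x)) *
            ∫ u, Real.exp (-‖Matrix.toEuclideanLin (matSqrt (Fη η)) u‖ ^ 2 / 2))
    (hw1 : IntegrableOn (fun η => dia η * Real.exp (φ η + δ η)) A)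
    (hw2 : IntegrableOn (fun η => Real.exp (φ η + δ η)) A)
    (hwpos : 0 < ∫ η in A, Real.exp (φ η + δ η))
    (errA : ℝ)
    (herrA : errA =
      (∫ η in A, dia η * Real.exp (φ η + δ η)) / ∫ η in A, Real.exp (φ η + δ η))
    -- the fixed test function g, |g| ≤ 1
    (g : EuclideanSpace ℝ (Fin p) → ℝ) (hg : Measurable g) (hgb : ∀ θ, |g θ| ≤ 1)
    -- Δ_{g,η} : difference of the Gaussian expectations of g under N(θ_η, F_η⁻¹)
    -- and N(θ*, F⁻¹) (Gaussian expectations as normalized Gaussian integrals)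
    (Δgη : EuclideanSpace ℝ (Fin q) → ℝ)
    (hΔgη : ∀ η, Δgη η =
      (∫ u, g (θη η + u) * Real.exp (-‖Matrix.toEuclideanLin (matSqrt (Fη η)) u‖ ^ 2 / 2)) /
        (∫ u, Real.exp (-‖Matrix.toEuclideanLin (matSqrt (Fη η)) u‖ ^ 2 / 2)) -
      (∫ u, g (θs + u) * Real.exp (-‖Matrix.toEuclideanLin (matSqrt (Fη ηs)) u‖ ^ 2 / 2)) /
        (∫ u, Real.exp (-‖Matrix.toEuclideanLin (matSqrt (Fη ηs)) u‖ ^ 2 / 2)))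
    (hΔint : IntegrableOn (fun η => Δgη η * Real.exp (φ η + δ η)) A)
    (Δg : ℝ)
    (hΔg : Δg = |(∫ η in A, Δgη η * Real.exp (φ η + δ η)) /
      ∫ η in A, Real.exp (φ η + δ η)|)
    (hsmall : errA + Δg < 1 / 2 - Real.exp (-x)) :
    |(∫ z in (Set.univ : Set (EuclideanSpace ℝ (Fin p))) ×ˢ A,
          Real.exp (f z.1 z.2) * g z.1) /
        (∫ z in (Set.univ : Set (EuclideanSpace ℝ (Fin p))) ×ˢ A, Real.exp (f z.1 z.2)) -
      (∫ u, g (θs + u) * Real.exp (-‖Matrix.toEuclideanLin (matSqrt (Fη ηs)) u‖ ^ 2 / 2)) /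
        (∫ u, Real.exp (-‖Matrix.toEuclideanLin (matSqrt (Fη ηs)) u‖ ^ 2 / 2))|
      ≤ 2 * (errA + Δg + Real.exp (-x)) / (1 - errA - Δg - Real.exp (-x)) :=
  single_gaussian_laplace_approximation_general p q A hA f θη Fη dia θs ηs hηs x hFη hintf φ δ hφ hδ
    hlap hw1 hw2 hwpos errA herrA g hg hgb Δgη hΔgη hΔint Δg hΔg hsmall
end

section
/- (Trace-norm bound under a Loewner sandwich, Lemma on discrepancy of precision blocks.) Let F be a symmetric positive definite p × p real matrix, G a symmetric p × p matrix, and 0 ≤ δ < 1 such that (1/(1 + δ)) F^{-1} ⪯ G ⪯ (1/(1 − δ)) F^{-1} in the Loewner order. Then for any k × p real matrix Q, the nuclear (trace) norm of the symmetric matrix Q (G − F^{-1}) Qᵀ satisfies ‖Q (G − F^{-1}) Qᵀ‖₁ ≤ (δ / (1 − δ)) · tr(Q F^{-1} Qᵀ), where ‖M‖₁ denotes the sum of the absolute values of the eigenvalues of the symmetric matrix M. -/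
/-!
Write `D = G - F⁻¹` and `c = δ / (1 - δ)`. The sandwich gives `-c F⁻¹ ⪯ D ⪯ c F⁻¹`, and
congruence by `Q` preserves this: `-c Q F⁻¹ Qᵀ ⪯ Q D Qᵀ ⪯ c Q F⁻¹ Qᵀ`. Testing both bounds on
an orthonormal eigenbasis `vᵢ` of `Q D Qᵀ` gives `|λᵢ| ≤ c vᵢᵀ Q F⁻¹ Qᵀ vᵢ`, and summing over an
orthonormal basis computes the trace.
-/

open Matrix

namespace Matrix

open scoped ComplexOrder

variable {𝕜 n : Type*} [RCLike 𝕜]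

lemma PosSemidef.smul_add_sub_of_sub_smul {S G : Matrix n n 𝕜} (hS : S.PosSemidef) {a c : ℝ}
    (ha : 1 - a ≤ c) (hlow : (G - a • S).PosSemidef) : (c • S + (G - S)).PosSemidef := by
  convert hlow.add (hS.smul (sub_nonneg.mpr ha)) using 1
  module

lemma PosSemidef.smul_sub_sub_of_smul_sub {S G : Matrix n n 𝕜} (hS : S.PosSemidef) {b c : ℝ}
    (hb : b - 1 ≤ c) (hup : (b • S - G).PosSemidef) : (c • S - (G - S)).PosSemidef := by
  convert hup.add (hS.smul (sub_nonneg.mpr hb)) using 1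
  module

variable [Fintype n]

lemma trace_eq_sum_star_dotProduct_mulVec (T : Matrix n n 𝕜)
    (b : OrthonormalBasis n 𝕜 (EuclideanSpace 𝕜 n)) :
    T.trace = ∑ i, star ⇑(b i) ⬝ᵥ (T *ᵥ ⇑(b i)) := by
  classical
  have htrace : LinearMap.trace 𝕜 _ (toEuclideanLin T) = T.trace := by
    rw [toEuclideanLin_eq_toLin_orthonormal,
      LinearMap.trace_eq_matrix_trace 𝕜 (EuclideanSpace.basisFun n 𝕜).toBasis,
      LinearMap.toMatrix_toLin]
  rw [← htrace, LinearMap.trace_eq_sum_inner _ b]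
  simp only [EuclideanSpace.inner_eq_star_dotProduct, ofLp_toLpLin, toLin'_apply,
    dotProduct_comm]

lemma IsHermitian.sum_abs_eigenvalues_le_re_trace [DecidableEq n] {H T : Matrix n n 𝕜}
    (hH : H.IsHermitian) (hadd : (T + H).PosSemidef) (hsub : (T - H).PosSemidef) :
    ∑ i, |hH.eigenvalues i| ≤ RCLike.re T.trace := by
  rw [T.trace_eq_sum_star_dotProduct_mulVec hH.eigenvectorBasis, map_sum]
  refine Finset.sum_le_sum fun i _ ↦ abs_le.mpr ⟨?_, ?_⟩
  · have := hadd.re_dotProduct_nonneg (hH.eigenvectorBasis i)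
    rw [add_mulVec, dotProduct_add, map_add, ← hH.eigenvalues_eq] at this
    linarith
  · have := hsub.re_dotProduct_nonneg (hH.eigenvectorBasis i)
    rw [sub_mulVec, dotProduct_sub, map_sub, ← hH.eigenvalues_eq] at this
    linarith

end Matrix

theorem trace_norm_bound_loewner_sandwich_general
    (p k : ℕ)
    (F G : Matrix (Fin p) (Fin p) ℝ)
    (hF : F.PosDef)
    (δ : ℝ) (hδ0 : 0 ≤ δ) (hδ1 : δ < 1)
    (hlow : (G - (1 + δ)⁻¹ • F⁻¹).PosSemidef)
    (hup : ((1 - δ)⁻¹ • F⁻¹ - G).PosSemidef)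
    (Q : Matrix (Fin k) (Fin p) ℝ)
    (hH : (Q * (G - F⁻¹) * Qᵀ).IsHermitian) :
    (∑ i, |hH.eigenvalues i|) ≤ δ / (1 - δ) * (Q * F⁻¹ * Qᵀ).trace := by
  have h1δ : 0 < 1 - δ := by linarith
  have hlow_coeff : 1 - (1 + δ)⁻¹ ≤ δ / (1 - δ) := by
    rw [inv_eq_one_div, one_sub_div (by linarith)]
    gcongr <;> linarith
  have hup_coeff : (1 - δ)⁻¹ - 1 ≤ δ / (1 - δ) := by
    field_simp
    linarith
  have hFinv : F⁻¹.PosSemidef := hF.inv.posSemidef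
  have hconj {M : Matrix (Fin p) (Fin p) ℝ} (hM : M.PosSemidef) : (Q * M * Qᵀ).PosSemidef := by
    simpa only [conjTranspose_eq_transpose_of_trivial] using hM.mul_mul_conjTranspose_same Q
  have hbound := hH.sum_abs_eigenvalues_le_re_trace (T := (δ / (1 - δ) : ℝ) • (Q * F⁻¹ * Qᵀ))
    (by simpa only [Matrix.mul_add, Matrix.add_mul, Matrix.mul_smul, Matrix.smul_mul] using
      hconj (hFinv.smul_add_sub_of_sub_smul hlow_coeff hlow))
    (by simpa only [Matrix.mul_sub, Matrix.sub_mul, Matrix.mul_smul, Matrix.smul_mul] using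
      hconj (hFinv.smul_sub_sub_of_smul_sub hup_coeff hup))
  rwa [RCLike.re_to_real, trace_smul, smul_eq_mul] at hbound

/-- Trace-norm bound under a Loewner sandwich: if
`(1/(1+δ)) F⁻¹ ⪯ G ⪯ (1/(1−δ)) F⁻¹`, then for any `Q` the nuclear norm of
`Q (G − F⁻¹) Qᵀ` (sum of absolute values of its eigenvalues) is at most
`(δ/(1−δ)) tr (Q F⁻¹ Qᵀ)`. -/
theorem trace_norm_bound_loewner_sandwich
    (p k : ℕ)
    (F G : Matrix (Fin p) (Fin p) ℝ)
    (hF : F.PosDef) (hG : G.IsSymm)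
    (δ : ℝ) (hδ0 : 0 ≤ δ) (hδ1 : δ < 1)
    (hlow : (G - (1 + δ)⁻¹ • F⁻¹).PosSemidef)
    (hup : ((1 - δ)⁻¹ • F⁻¹ - G).PosSemidef)
    (Q : Matrix (Fin k) (Fin p) ℝ)
    (hH : (Q * (G - F⁻¹) * Qᵀ).IsHermitian) :
    (∑ i, |hH.eigenvalues i|) ≤ δ / (1 - δ) * (Q * F⁻¹ * Qᵀ).trace :=
  trace_norm_bound_loewner_sandwich_general p k F G hF δ hδ0 hδ1 hlow hup Q hH
end
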